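/- Let Ψ: G → K and Δ: K → H be right-resolving graph homomorphisms and Φ = Δ ∘ Ψ. Then Φ is synchronizing if and only if both Ψ and Δ are synchronizing. -/
import Mathlib


/-- A finite directed multigraph. -/
structure FinGraph where
  V : Type
  E : Type
  [fintV : Fintype V]
  [fintE : Fintype E]
  [decV : DecidableEq V]
  [decE : DecidableEq E]
  src : E → V
  tgt : E → V

attribute [instance] FinGraph.fintV FinGraph.fintE FinGraph.decV FinGraph.decE

/-- A graph homomorphism. -/
structure GHom (G H : FinGraph) where
  eMap : G.E → H.E
  vMap : G.V → H.V
  src_eq : ∀ e, H.src (eMap e) = vMap (G.src e)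
  tgt_eq : ∀ e, H.tgt (eMap e) = vMap (G.tgt e)

def GHom.comp {G K H : FinGraph} (Δ : GHom K H) (Ψ : GHom G K) : GHom G H where
  eMap := Δ.eMap ∘ Ψ.eMap
  vMap := Δ.vMap ∘ Ψ.vMap
  src_eq := fun e => by
    simp only [Function.comp_apply, Δ.src_eq, Ψ.src_eq]
  tgt_eq := fun e => by
    simp only [Function.comp_apply, Δ.tgt_eq, Ψ.tgt_eq]

/-- The restriction of a homomorphism to the outgoing edges of a state. -/
def outMap {G H : FinGraph} (Φ : GHom G H) (I : G.V) :
    {e : G.E // G.src e = I} → {f : H.E // H.src f = Φ.vMap I} :=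
  fun e => ⟨Φ.eMap e.1, (Φ.src_eq e.1).trans (congrArg Φ.vMap e.2)⟩

/-- A right-resolver: a surjective homomorphism restricting to a bijection
on the outgoing edges of each state. -/
def IsRR {G H : FinGraph} (Φ : GHom G H) : Prop :=
  Function.Surjective Φ.vMap ∧ ∀ I : G.V, Function.Bijective (outMap Φ I)

/-- `IsPathFrom H I u`: the edge list `u` is a path in `H` starting at `I`. -/
def IsPathFrom (H : FinGraph) : H.V → List H.E → Prop
  | _, [] => True
  | I, e :: u => H.src e = I ∧ IsPathFrom H (H.tgt e) u

/-- The terminal state of a path starting at `I`. -/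
def pathEnd (H : FinGraph) (I : H.V) (u : List H.E) : H.V :=
  u.foldl (fun _ e => H.tgt e) I

/-- One-step transition: `I · a` is the target of the unique edge at `I`
lifting `a` (when `Φ` is right-resolving and `a` starts at the image of `I`). -/
noncomputable def step {G H : FinGraph} (Φ : GHom G H) (I : G.V) (a : H.E) : G.V :=
  if h : ∃ e : G.E, G.src e = I ∧ Φ.eMap e = a then G.tgt h.choose else I

/-- Transition along a word: `I · u`. -/
noncomputable def transPath {G H : FinGraph} (Φ : GHom G H) (I : G.V) (u : List H.E) : G.V :=
  u.foldl (step Φ) I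

/-- The stability relation of a right-resolver. -/
def Stable {G H : FinGraph} (Φ : GHom G H) (I₁ I₂ : G.V) : Prop :=
  Φ.vMap I₁ = Φ.vMap I₂ ∧
  ∀ u : List H.E, IsPathFrom H (Φ.vMap I₁) u →
    ∃ v : List H.E, IsPathFrom H (pathEnd H (Φ.vMap I₁) u) v ∧
      transPath Φ I₁ (u ++ v) = transPath Φ I₂ (u ++ v)

/-- A right-resolver is synchronizing if each fiber of its state map is a
single stability class. -/
def Synchronizing {G H : FinGraph} (Φ : GHom G H) : Prop :=
  ∀ I₁ I₂ : G.V, Φ.vMap I₁ = Φ.vMap I₂ → Stable Φ I₁ I₂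

/-- The fiber of the state map over a state of the codomain. -/
def fiber {G H : FinGraph} (Φ : GHom G H) (I : H.V) : Set G.V := {J | Φ.vMap J = I}

/-- The image `U · u` of a set of states under transition along a word. -/
noncomputable def setTrans {G H : FinGraph} (Φ : GHom G H) (U : Set G.V)
    (u : List H.E) : Set G.V :=
  (fun J => transPath Φ J u) '' U

/-- A minimal image of a right-resolver. -/
def IsMinImage {G H : FinGraph} (Φ : GHom G H) (U : Set G.V) : Prop :=
  ∃ (I : H.V) (u : List H.E), IsPathFrom H I u ∧ U = setTrans Φ (fiber Φ I) u ∧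
    ∀ v : List H.E, IsPathFrom H (pathEnd H I u) v →
      (setTrans Φ U v).ncard = U.ncard

/-- Strong connectedness: a directed path between every ordered pair of states. -/
def StronglyConnected (G : FinGraph) : Prop :=
  ∀ I J : G.V, ∃ u : List G.E, IsPathFrom G I u ∧ pathEnd G I u = J

section Aux

theorem pathEnd_append (H : FinGraph) (I : H.V) (u v : List H.E) :
    pathEnd H I (u ++ v) = pathEnd H (pathEnd H I u) v := by
  unfold pathEnd; rw [List.foldl_append]

theorem transPath_append {G H : FinGraph} (Φ : GHom G H) (I : G.V) (u v : List H.E) :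
    transPath Φ I (u ++ v) = transPath Φ (transPath Φ I u) v := by
  unfold transPath; rw [List.foldl_append]

theorem isPathFrom_append {H : FinGraph} : ∀ (u : List H.E) (I : H.V) (v : List H.E),
    IsPathFrom H I u → IsPathFrom H (pathEnd H I u) v → IsPathFrom H I (u ++ v)
  | [], _, _, _, hv => hv
  | e :: u, _, v, ⟨he, hu⟩, hv => ⟨he, isPathFrom_append u _ v hu hv⟩

theorem step_lift {G H : FinGraph} {Φ : GHom G H} (hΦ : IsRR Φ) {I : G.V} {e : G.E}
    (he : G.src e = I) : step Φ I (Φ.eMap e) = G.tgt e := by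
  have hex : ∃ e' : G.E, G.src e' = I ∧ Φ.eMap e' = Φ.eMap e := ⟨e, he, rfl⟩
  rw [step, dif_pos hex]
  obtain ⟨h1, h2⟩ := hex.choose_spec
  have := (hΦ.2 I).1 (a₁ := ⟨hex.choose, h1⟩) (a₂ := ⟨e, he⟩) (Subtype.ext h2)
  exact congrArg G.tgt (congrArg Subtype.val this)

theorem step_not_lift {G H : FinGraph} (Φ : GHom G H) {I : G.V} {a : H.E}
    (ha : ¬ (H.src a = Φ.vMap I)) : step Φ I a = I := by
  rw [step, dif_neg]
  rintro ⟨e, he, rfl⟩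
  exact ha ((Φ.src_eq e).trans (congrArg Φ.vMap he))

theorem exists_lift {G H : FinGraph} {Φ : GHom G H} (hΦ : IsRR Φ) {I : G.V} {a : H.E}
    (ha : H.src a = Φ.vMap I) : ∃ e, G.src e = I ∧ Φ.eMap e = a := by
  obtain ⟨⟨e, he⟩, hf⟩ := (hΦ.2 I).2 ⟨a, ha⟩
  exact ⟨e, he, congrArg Subtype.val hf⟩

theorem vMap_step {G H : FinGraph} {Φ : GHom G H} (hΦ : IsRR Φ) {I : G.V} {a : H.E}
    (ha : H.src a = Φ.vMap I) : Φ.vMap (step Φ I a) = H.tgt a := by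
  obtain ⟨e, he, rfl⟩ := exists_lift hΦ ha
  rw [step_lift hΦ he, Φ.tgt_eq]

theorem isRR_comp {G K H : FinGraph} {Ψ : GHom G K} {Δ : GHom K H}
    (hΨ : IsRR Ψ) (hΔ : IsRR Δ) : IsRR (Δ.comp Ψ) := by
  refine ⟨(hΔ.1).comp hΨ.1, fun I => ?_⟩
  have h : outMap (Δ.comp Ψ) I = (outMap Δ (Ψ.vMap I)) ∘ (outMap Ψ I) := rfl
  rw [h]
  exact (hΔ.2 _).comp (hΨ.2 I)

variable {G K H : FinGraph} {Ψ : GHom G K} {Δ : GHom K H}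

theorem vMap_step_comp (hΨ : IsRR Ψ) (hΔ : IsRR Δ) (I : G.V) (a : H.E) :
    Ψ.vMap (step (Δ.comp Ψ) I a) = step Δ (Ψ.vMap I) a := by
  by_cases ha : H.src a = (Δ.comp Ψ).vMap I
  · obtain ⟨e, he, rfl⟩ := exists_lift (isRR_comp hΨ hΔ) ha
    rw [step_lift (isRR_comp hΨ hΔ) he]
    have hb : K.src (Ψ.eMap e) = Ψ.vMap I := (Ψ.src_eq e).trans (congrArg Ψ.vMap he)
    have h2 : (Δ.comp Ψ).eMap e = Δ.eMap (Ψ.eMap e) := rfl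
    rw [h2, step_lift hΔ hb, Ψ.tgt_eq]
  · rw [step_not_lift _ ha, step_not_lift Δ ha]

theorem vMap_transPath_comp (hΨ : IsRR Ψ) (hΔ : IsRR Δ) : ∀ (u : List H.E) (I : G.V),
    Ψ.vMap (transPath (Δ.comp Ψ) I u) = transPath Δ (Ψ.vMap I) u
  | [], _ => rfl
  | a :: u, I => by
    show Ψ.vMap (transPath (Δ.comp Ψ) (step (Δ.comp Ψ) I a) u)
        = transPath Δ (step Δ (Ψ.vMap I) a) u
    rw [← vMap_step_comp hΨ hΔ I a]
    exact vMap_transPath_comp hΨ hΔ u _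

theorem vMap_transPath {G H : FinGraph} {Φ : GHom G H} (hΦ : IsRR Φ) :
    ∀ (u : List H.E) (I : G.V), IsPathFrom H (Φ.vMap I) u →
    Φ.vMap (transPath Φ I u) = pathEnd H (Φ.vMap I) u
  | [], _, _ => rfl
  | a :: u, I, ⟨ha, hu⟩ => by
    show Φ.vMap (transPath Φ (step Φ I a) u) = pathEnd H (H.tgt a) u
    have h1 : Φ.vMap (step Φ I a) = H.tgt a := vMap_step hΦ ha
    rw [← h1] at hu ⊢
    exact vMap_transPath hΦ u _ hu

theorem step_comp_eMap (hΨ : IsRR Ψ) (hΔ : IsRR Δ) {I : G.V} {b : K.E}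
    (hb : K.src b = Ψ.vMap I) : step (Δ.comp Ψ) I (Δ.eMap b) = step Ψ I b := by
  obtain ⟨e, he, rfl⟩ := exists_lift hΨ hb
  rw [step_lift hΨ he]
  have h2 : Δ.eMap (Ψ.eMap e) = (Δ.comp Ψ).eMap e := rfl
  rw [h2, step_lift (isRR_comp hΨ hΔ) he]

theorem transPath_comp_map (hΨ : IsRR Ψ) (hΔ : IsRR Δ) : ∀ (w : List K.E) (I : G.V),
    IsPathFrom K (Ψ.vMap I) w →
    transPath (Δ.comp Ψ) I (w.map Δ.eMap) = transPath Ψ I w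
  | [], _, _ => rfl
  | b :: w, I, ⟨hb, hw⟩ => by
    show transPath (Δ.comp Ψ) (step (Δ.comp Ψ) I (Δ.eMap b)) (w.map Δ.eMap)
        = transPath Ψ (step Ψ I b) w
    rw [step_comp_eMap hΨ hΔ hb]
    refine transPath_comp_map hΨ hΔ w _ ?_
    rw [vMap_step hΨ hb]
    exact hw

theorem isPathFrom_map (Δ : GHom K H) : ∀ (w : List K.E) (J : K.V),
    IsPathFrom K J w → IsPathFrom H (Δ.vMap J) (w.map Δ.eMap)
  | [], _, _ => trivial
  | b :: w, _, ⟨hb, hw⟩ => ⟨(Δ.src_eq b).trans (congrArg Δ.vMap hb), by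
      rw [Δ.tgt_eq]
      exact isPathFrom_map Δ w _ hw⟩

theorem pathEnd_map (Δ : GHom K H) : ∀ (w : List K.E) (J : K.V),
    pathEnd H (Δ.vMap J) (w.map Δ.eMap) = Δ.vMap (pathEnd K J w)
  | [], _ => rfl
  | b :: w, J => by
    show pathEnd H (H.tgt (Δ.eMap b)) (w.map Δ.eMap) = Δ.vMap (pathEnd K (K.tgt b) w)
    rw [Δ.tgt_eq]
    exact pathEnd_map Δ w _

theorem lift_path (hΔ : IsRR Δ) : ∀ (v : List H.E) (J : K.V),
    IsPathFrom H (Δ.vMap J) v → ∃ x, IsPathFrom K J x ∧ x.map Δ.eMap = v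
  | [], _, _ => ⟨[], trivial, rfl⟩
  | a :: v, J, ⟨ha, hv⟩ => by
    obtain ⟨b, hb, rfl⟩ := exists_lift hΔ ha
    rw [Δ.tgt_eq] at hv
    obtain ⟨x, hx1, hx2⟩ := lift_path hΔ v (K.tgt b) hv
    exact ⟨b :: x, ⟨hb, hx1⟩, by simp [hx2]⟩

end Aux

/-- a composition of right-resolvers is synchronizing iff both
factors are synchronizing. -/
theorem synchronizing_comp {G K H : FinGraph} (Ψ : GHom G K) (Δ : GHom K H)
    (hΨ : IsRR Ψ) (hΔ : IsRR Δ) :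
    Synchronizing (Δ.comp Ψ) ↔ (Synchronizing Ψ ∧ Synchronizing Δ) := by
  have hΦ : IsRR (Δ.comp Ψ) := isRR_comp hΨ hΔ
  constructor
  · intro hsync
    constructor
    · -- Ψ synchronizing
      intro I₁ I₂ hI
      refine ⟨hI, fun w hw => ?_⟩
      have hI' : (Δ.comp Ψ).vMap I₁ = (Δ.comp Ψ).vMap I₂ := congrArg Δ.vMap hI
      obtain ⟨_, hstab⟩ := hsync I₁ I₂ hI'
      have hu : IsPathFrom H ((Δ.comp Ψ).vMap I₁) (w.map Δ.eMap) := isPathFrom_map Δ w _ hw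
      obtain ⟨v, hv, heq⟩ := hstab (w.map Δ.eMap) hu
      have hJ' : Δ.vMap (pathEnd K (Ψ.vMap I₁) w)
          = pathEnd H ((Δ.comp Ψ).vMap I₁) (w.map Δ.eMap) := (pathEnd_map Δ w _).symm
      obtain ⟨x, hx1, hx2⟩ := lift_path hΔ v _ (by rw [hJ']; exact hv)
      refine ⟨x, hx1, ?_⟩
      have hw2 : IsPathFrom K (Ψ.vMap I₂) w := by rw [← hI]; exact hw
      have hx2' : IsPathFrom K (pathEnd K (Ψ.vMap I₂) w) x := by rw [← hI]; exact hx1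
      have p1 : IsPathFrom K (Ψ.vMap I₁) (w ++ x) := isPathFrom_append w _ x hw hx1
      have p2 : IsPathFrom K (Ψ.vMap I₂) (w ++ x) := isPathFrom_append w _ x hw2 hx2'
      rw [← transPath_comp_map hΨ hΔ (w ++ x) I₁ p1,
          ← transPath_comp_map hΨ hΔ (w ++ x) I₂ p2,
          List.map_append, hx2]
      exact heq
    · -- Δ synchronizing
      intro J₁ J₂ hJ
      obtain ⟨I₁, rfl⟩ := hΨ.1 J₁
      obtain ⟨I₂, rfl⟩ := hΨ.1 J₂
      refine ⟨hJ, fun u hu => ?_⟩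
      obtain ⟨_, hstab⟩ := hsync I₁ I₂ hJ
      obtain ⟨v, hv, heq⟩ := hstab u hu
      refine ⟨v, hv, ?_⟩
      rw [← vMap_transPath_comp hΨ hΔ, ← vMap_transPath_comp hΨ hΔ, heq]
  · rintro ⟨hΨs, hΔs⟩ I₁ I₂ hI
    refine ⟨hI, fun u hu => ?_⟩
    have hJ : Δ.vMap (Ψ.vMap I₁) = Δ.vMap (Ψ.vMap I₂) := hI
    obtain ⟨_, hstabΔ⟩ := hΔs (Ψ.vMap I₁) (Ψ.vMap I₂) hJ
    obtain ⟨v₁, hv₁, heq₁⟩ := hstabΔ u hu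
    have hIm1 : Ψ.vMap (transPath (Δ.comp Ψ) I₁ (u ++ v₁))
        = transPath Δ (Ψ.vMap I₁) (u ++ v₁) := vMap_transPath_comp hΨ hΔ _ _
    have hIm2 : Ψ.vMap (transPath (Δ.comp Ψ) I₂ (u ++ v₁))
        = transPath Δ (Ψ.vMap I₂) (u ++ v₁) := vMap_transPath_comp hΨ hΔ _ _
    have hI' : Ψ.vMap (transPath (Δ.comp Ψ) I₁ (u ++ v₁))
        = Ψ.vMap (transPath (Δ.comp Ψ) I₂ (u ++ v₁)) := by rw [hIm1, hIm2, heq₁]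
    obtain ⟨_, hstabΨ⟩ := hΨs _ _ hI'
    obtain ⟨x, hx1, heq₂⟩ := hstabΨ [] trivial
    have hx1' : IsPathFrom K (Ψ.vMap (transPath (Δ.comp Ψ) I₁ (u ++ v₁))) x := hx1
    have hx2' : IsPathFrom K (Ψ.vMap (transPath (Δ.comp Ψ) I₂ (u ++ v₁))) x := by
      rw [← hI']; exact hx1
    refine ⟨v₁ ++ x.map Δ.eMap, ?_, ?_⟩
    · refine isPathFrom_append v₁ _ _ hv₁ ?_
      have h1 : IsPathFrom H (Δ.vMap (Ψ.vMap (transPath (Δ.comp Ψ) I₁ (u ++ v₁))))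
          (x.map Δ.eMap) := isPathFrom_map Δ x _ hx1'
      have h2 : (Δ.comp Ψ).vMap (transPath (Δ.comp Ψ) I₁ (u ++ v₁))
          = pathEnd H ((Δ.comp Ψ).vMap I₁) (u ++ v₁) :=
        vMap_transPath hΦ (u ++ v₁) I₁ (isPathFrom_append u _ v₁ hu hv₁)
      rw [← pathEnd_append, ← h2]
      exact h1
    · rw [← List.append_assoc,
          transPath_append (Δ.comp Ψ) I₁ (u ++ v₁) (x.map Δ.eMap),
          transPath_append (Δ.comp Ψ) I₂ (u ++ v₁) (x.map Δ.eMap),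
          transPath_comp_map hΨ hΔ x _ hx1', transPath_comp_map hΨ hΔ x _ hx2']
      exact heq₂
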